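/- The triples of partitions with nonzero LR coefficient form an additive semigroup: if c(λ;μ,ν) ≠ 0 and c(λ';μ',ν') ≠ 0, then c(λ+λ'; μ+μ', ν+ν') ≠ 0. -/

import Mathlib

/-- A partition: a weakly decreasing sequence of naturals with finitely many
nonzero terms.  `parts i` is the `(i+1)`-st part `λ_{i+1}`. -/
structure LRPartition where
  parts : ℕ → ℕ
  antitone' : ∀ ⦃i j : ℕ⦄, i ≤ j → parts j ≤ parts i
  eventually_zero : ∃ N, ∀ i, N ≤ i → parts i = 0

namespace LRPartition

/-- Componentwise sum `λ + μ`. -/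
def add (a b : LRPartition) : LRPartition where
  parts i := a.parts i + b.parts i
  antitone' := fun _ _ h => Nat.add_le_add (a.antitone' h) (b.antitone' h)
  eventually_zero := by
    obtain ⟨M, hM⟩ := a.eventually_zero
    obtain ⟨N, hN⟩ := b.eventually_zero
    refine ⟨max M N, fun i hi => ?_⟩
    show a.parts i + b.parts i = 0
    rw [hM i (le_trans (le_max_left M N) hi), hN i (le_trans (le_max_right M N) hi)]

instance : Add LRPartition := ⟨add⟩

@[simp] theorem add_parts (a b : LRPartition) (i : ℕ) :
    (a + b).parts i = a.parts i + b.parts i := rfl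

/-- The stretched partition `n • λ = (nλ₁, nλ₂, …)`. -/
def stretch (n : ℕ) (a : LRPartition) : LRPartition where
  parts i := n * a.parts i
  antitone' := fun _ _ h => Nat.mul_le_mul_left n (a.antitone' h)
  eventually_zero := by
    obtain ⟨N, hN⟩ := a.eventually_zero
    exact ⟨N, fun i hi => by show n * a.parts i = 0; rw [hN i hi, Nat.mul_zero]⟩

instance : SMul ℕ LRPartition := ⟨stretch⟩

@[simp] theorem smul_parts (n : ℕ) (a : LRPartition) (i : ℕ) :
    (n • a).parts i = n * a.parts i := rfl

/-- Containment of Young diagrams: `μ ⊆ λ` iff `μᵢ ≤ λᵢ` for all `i`. -/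
def Sub (m l : LRPartition) : Prop := ∀ i, m.parts i ≤ l.parts i

/-- The number of (nonzero) parts, `l(λ)`. -/
noncomputable def length (a : LRPartition) : ℕ := {i | a.parts i ≠ 0}.ncard

end LRPartition

/-- `u = λ ∪ λ'`: the multiset of (positive) parts of `u` is the multiset union of
those of `λ` and `λ'`, expressed via multiplicities of every positive value `t`. -/
def IsUnion (a b u : LRPartition) : Prop :=
  ∀ t : ℕ, 0 < t →
    {i | u.parts i = t}.ncard = {i | a.parts i = t}.ncard + {i | b.parts i = t}.ncard

/-- The cells of the skew diagram `λ/μ`: boxes `(i, j)` (row `i`, column `j`,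
both 0-indexed) with `μ_{i+1} ≤ j < λ_{i+1}`. -/
def skewCells (l m : LRPartition) : Set (ℕ × ℕ) :=
  {p | m.parts p.1 ≤ p.2 ∧ p.2 < l.parts p.1}

/-- `T` is a Littlewood–Richardson tableau of shape `λ/μ` and content `ν`.
`T (i, j)` records the entry in box `(i, j)`; boxes carry positive integers and `T`
vanishes off the diagram.  Rows weakly increase, columns strictly increase, the entry
`k + 1` occurs `ν_{k+1} = ν.parts k` times, and the lattice-word condition on the
reverse reading word is expressed via its initial segments: for every `r c`, the
cells read up to position `(r, c)` are exactly those in rows `< r` together with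
those in row `r` in columns `≥ c`. -/
structure IsLRTableau (l m n : LRPartition) (T : ℕ × ℕ → ℕ) : Prop where
  sub : LRPartition.Sub m l
  pos : ∀ p ∈ skewCells l m, 0 < T p
  zero : ∀ p, p ∉ skewCells l m → T p = 0
  row_weak : ∀ i j j', (i, j) ∈ skewCells l m → (i, j') ∈ skewCells l m →
    j ≤ j' → T (i, j) ≤ T (i, j')
  col_strict : ∀ i i' j, (i, j) ∈ skewCells l m → (i', j) ∈ skewCells l m →
    i < i' → T (i, j) < T (i', j)
  content : ∀ k : ℕ, {p ∈ skewCells l m | T p = k + 1}.ncard = n.parts k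
  lattice : ∀ r c k : ℕ, 0 < k →
    {p ∈ skewCells l m | (p.1 < r ∨ (p.1 = r ∧ c ≤ p.2)) ∧ T p = k + 1}.ncard ≤
      {p ∈ skewCells l m | (p.1 < r ∨ (p.1 = r ∧ c ≤ p.2)) ∧ T p = k}.ncard

/-- The Littlewood–Richardson coefficient `c(λ; μ, ν)`: the number of LR tableaux of
shape `λ/μ` and content `ν` (zero when `μ ⊄ λ`). -/
noncomputable def LRcoeff (l m n : LRPartition) : ℕ :=
  Set.ncard {T : ℕ × ℕ → ℕ | IsLRTableau l m n T}

/-- `λ/μ` is a partition shape: `μᵢ = 0` in every nonempty row. -/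
def IsPartitionShape (l m : LRPartition) : Prop :=
  ∀ i, m.parts i < l.parts i → m.parts i = 0

/-- `λ/μ` is a rotated partition shape: `λᵢ` takes the same value in all nonempty rows. -/
def IsRotatedShape (l m : LRPartition) : Prop :=
  ∀ i j, m.parts i < l.parts i → m.parts j < l.parts j → l.parts i = l.parts j

/-- A proper skew diagram: neither a partition shape nor a rotated partition. -/
def IsProperSkew (l m : LRPartition) : Prop :=
  ¬ IsPartitionShape l m ∧ ¬ IsRotatedShape l m

/-- `λ/μ` is a basic skew diagram: `μᵢ < λᵢ` and `μᵢ ≤ λ_{i+1}` for each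
`1 ≤ i ≤ l(λ)` (no empty rows or columns). -/
def IsBasicSkew (l m : LRPartition) : Prop :=
  ∀ i, 0 < l.parts i → m.parts i < l.parts i ∧ m.parts i ≤ l.parts (i + 1)

/-- `Q^{λ,μ}_{λ',μ'}(n) = Σ_ν c(nλ+λ'; nμ+μ', ν)`, the sum over all partitions `ν`. -/
noncomputable def Qfun (l m l' m' : LRPartition) (n : ℕ) : ℕ :=
  ∑ᶠ ν : LRPartition, LRcoeff (n • l + l') (n • m + m') ν

/-- `P^{λ,μ,ν}_{λ',μ',ν'}(n) = c(nλ+λ'; nμ+μ', nν+ν')`. -/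
noncomputable def Pfun (l m nu l' m' nu' : LRPartition) (n : ℕ) : ℕ :=
  LRcoeff (n • l + l') (n • m + m') (n • nu + nu')

/-- The partition `(1^a)` consisting of `a` parts equal to `1`. -/
def onesPartition (a : ℕ) : LRPartition where
  parts i := if i < a then 1 else 0
  antitone' := by intro i j h; split_ifs <;> omega
  eventually_zero := ⟨a, fun i hi => by split_ifs <;> omega⟩

/-- The partition `(a)` with a single part `a` (the empty partition if `a = 0`). -/
def singlePartition (a : ℕ) : LRPartition where
  parts i := if i = 0 then a else 0
  antitone' := by intro i j h; split_ifs <;> omega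
  eventually_zero := ⟨1, fun i hi => by split_ifs <;> omega⟩

/-!
An LR tableau `T` of shape `λ/μ` is determined by its row boundaries
`F i k = μᵢ + #{entries ≤ k in row i}`: row `i` holds the entries `k + 1` exactly in the columns
`F i k ≤ j < F i (k + 1)`. In these coordinates every defining condition becomes linear:
`F i 0 = μᵢ`, `F i k = λᵢ` for large `k`, monotonicity in `k`, column strictness as the interlacing
`F (i + 1) (k + 1) ≤ F i k`, and the content and lattice conditions as (in)equalities between sums
of the row contents `F i (k + 1) - F i k`. Hence the sum of the boundary arrays of LR tableaux
for `(λ, μ, ν)` and `(λ', μ', ν')` is the boundary array of an LR tableau for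
`(λ + λ', μ + μ', ν + ν')`.
-/

open Finset

theorem mem_skewCells {l m : LRPartition} {i j : ℕ} :
    (i, j) ∈ skewCells l m ↔ m.parts i ≤ j ∧ j < l.parts i := Iff.rfl

theorem skewCells_finite (l m : LRPartition) : (skewCells l m).Finite := by
  obtain ⟨N, hN⟩ := l.eventually_zero
  refine ((Set.finite_Iio N).prod (Set.finite_Iio (l.parts 0))).subset ?_
  rintro ⟨i, j⟩ ⟨-, hj⟩
  have hi : i < N := by
    by_contra! hi
    rw [hN i hi] at hj
    exact Nat.not_lt_zero j hj
  exact ⟨hi, hj.trans_le (l.antitone' (Nat.zero_le i))⟩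

/-- `F i k` is the column at which the entries `> k` of row `i` of `T` begin. -/
structure IsRowBoundary (l m : LRPartition) (T : ℕ × ℕ → ℕ) (F : ℕ → ℕ → ℕ) : Prop where
  parts_le : ∀ i k, m.parts i ≤ F i k
  le_parts : ∀ i k, F i k ≤ l.parts i
  le_iff : ∀ i j k, (i, j) ∈ skewCells l m → (T (i, j) ≤ k ↔ j < F i k)

namespace IsRowBoundary

variable {l m : LRPartition} {T : ℕ × ℕ → ℕ} {F : ℕ → ℕ → ℕ}

theorem mem_and_eq_succ_iff (hF : IsRowBoundary l m T F) (i j k : ℕ) :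
    (i, j) ∈ skewCells l m ∧ T (i, j) = k + 1 ↔ F i k ≤ j ∧ j < F i (k + 1) := by
  constructor
  · rintro ⟨hc, hv⟩
    exact ⟨not_lt.1 fun h => by have := (hF.le_iff i j k hc).2 h; omega,
      (hF.le_iff i j (k + 1) hc).1 hv.le⟩
  · rintro ⟨h1, h2⟩
    have hc : (i, j) ∈ skewCells l m :=
      ⟨(hF.parts_le i k).trans h1, h2.trans_le (hF.le_parts i _)⟩
    have hle := (hF.le_iff i j (k + 1) hc).2 h2
    have hgt := (hF.le_iff i j k hc).not.2 h1.not_gt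
    exact ⟨hc, by omega⟩

theorem ncard_prefix_eq_succ (hF : IsRowBoundary l m T F) (r c k : ℕ) :
    {p ∈ skewCells l m | (p.1 < r ∨ (p.1 = r ∧ c ≤ p.2)) ∧ T p = k + 1}.ncard
      = ∑ i ∈ range r, (F i (k + 1) - F i k) + (F r (k + 1) - max (F r k) c) := by
  classical
  let lo i := if i = r then max (F r k) c else F i k
  have hset : {p ∈ skewCells l m | (p.1 < r ∨ (p.1 = r ∧ c ≤ p.2)) ∧ T p = k + 1}
      = ↑((range (r + 1)).biUnion fun i => {i} ×ˢ Ico (lo i) (F i (k + 1))) := by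
    ext ⟨i, j⟩
    have := hF.mem_and_eq_succ_iff i j k
    simp only [Set.mem_ofPred_eq, coe_biUnion, mem_coe, mem_range, Set.mem_iUnion, mem_product,
      mem_singleton, mem_Ico, exists_prop, lo]
    constructor
    · rintro ⟨hc, hi, hv⟩
      obtain ⟨h1, h2⟩ := this.1 ⟨hc, hv⟩
      refine ⟨i, by omega, rfl, ?_, h2⟩
      split_ifs with h
      · subst h
        exact max_le h1 (hi.resolve_left (by omega)).2
      · exact h1
    · rintro ⟨i, hi, rfl, hlo, h2⟩
      split_ifs at hlo with h
      · subst h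
        obtain ⟨hc, hv⟩ := this.2 ⟨le_of_max_le_left hlo, h2⟩
        exact ⟨hc, Or.inr ⟨rfl, le_of_max_le_right hlo⟩, hv⟩
      · obtain ⟨hc, hv⟩ := this.2 ⟨hlo, h2⟩
        exact ⟨hc, Or.inl (by omega), hv⟩
  rw [hset, Set.ncard_coe_finset, card_biUnion, sum_range_succ]
  · congr 1
    · refine sum_congr rfl fun i hi => ?_
      simp [lo, (mem_range.1 hi).ne]
    · simp [lo]
  · intro i _ i' _ hii'
    simp only [Function.onFun]
    exact disjoint_product.2 (Or.inl (disjoint_singleton.2 hii'))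

theorem ncard_eq_succ (hF : IsRowBoundary l m T F) {N : ℕ} (hN : ∀ i, N ≤ i → l.parts i = 0)
    (k : ℕ) :
    {p ∈ skewCells l m | T p = k + 1}.ncard = ∑ i ∈ range N, (F i (k + 1) - F i k) := by
  have hrows : {p ∈ skewCells l m | T p = k + 1}
      = {p ∈ skewCells l m | (p.1 < N ∨ (p.1 = N ∧ 0 ≤ p.2)) ∧ T p = k + 1} := by
    ext ⟨i, j⟩
    refine ⟨fun ⟨hc, hv⟩ => ⟨hc, Or.inl ?_, hv⟩, fun ⟨hc, _, hv⟩ => ⟨hc, hv⟩⟩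
    by_contra! hi
    have := hc.2
    rw [hN i hi] at this
    exact Nat.not_lt_zero j this
  have hN0 : F N (k + 1) = 0 := Nat.eq_zero_of_le_zero (hN N le_rfl ▸ hF.le_parts N (k + 1))
  rw [hrows, hF.ncard_prefix_eq_succ, hN0, Nat.zero_sub, add_zero]

end IsRowBoundary

/-- The conditions satisfied by the row boundaries `F` (see `IsRowBoundary`) of an LR tableau of
shape `λ/μ` and content `ν`; `F i (k + 1) - F i k` counts the entries `k + 1` in row `i`. -/
structure IsLRPattern (l m n : LRPartition) (F : ℕ → ℕ → ℕ) : Prop where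
  apply_zero : ∀ i, F i 0 = m.parts i
  monotone : ∀ i, Monotone (F i)
  le_parts : ∀ i k, F i k ≤ l.parts i
  eventually_eq_parts : ∃ K, ∀ i k, K ≤ k → F i k = l.parts i
  interlace : ∀ i k, F (i + 1) (k + 1) ≤ F i k
  content : ∀ N, (∀ i, N ≤ i → l.parts i = 0) →
    ∀ k, ∑ i ∈ range N, (F i (k + 1) - F i k) = n.parts k
  lattice : ∀ r k, ∑ i ∈ range (r + 1), (F i (k + 1 + 1) - F i (k + 1)) ≤
    ∑ i ∈ range r, (F i (k + 1) - F i k)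

theorem sum_tsub_add_of_monotone {F G : ℕ → ℕ → ℕ} (hF : ∀ i, Monotone (F i))
    (hG : ∀ i, Monotone (G i)) (s : Finset ℕ) {k k' : ℕ} (hk : k ≤ k') :
    ∑ i ∈ s, ((F i k' + G i k') - (F i k + G i k)) =
      ∑ i ∈ s, (F i k' - F i k) + ∑ i ∈ s, (G i k' - G i k) := by
  rw [← sum_add_distrib]
  refine sum_congr rfl fun i _ => ?_
  have := hF i hk
  have := hG i hk
  omega

namespace IsLRPattern

variable {l m n l' m' n' : LRPartition} {F F' : ℕ → ℕ → ℕ}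

theorem add (hF : IsLRPattern l m n F) (hF' : IsLRPattern l' m' n' F') :
    IsLRPattern (l + l') (m + m') (n + n') (fun i k => F i k + F' i k) where
  apply_zero i := by simp only [hF.apply_zero, hF'.apply_zero, LRPartition.add_parts]
  monotone i := (hF.monotone i).add (hF'.monotone i)
  le_parts i k := add_le_add (hF.le_parts i k) (hF'.le_parts i k)
  eventually_eq_parts := by
    obtain ⟨K, hK⟩ := hF.eventually_eq_parts
    obtain ⟨K', hK'⟩ := hF'.eventually_eq_parts
    exact ⟨max K K', fun i k hk => by
      rw [hK i k (le_of_max_le_left hk), hK' i k (le_of_max_le_right hk),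
        LRPartition.add_parts]⟩
  interlace i k := add_le_add (hF.interlace i k) (hF'.interlace i k)
  content N hN k := by
    have hl : ∀ i, N ≤ i → l.parts i = 0 := fun i hi => (Nat.add_eq_zero_iff.1 (hN i hi)).1
    have hl' : ∀ i, N ≤ i → l'.parts i = 0 := fun i hi => (Nat.add_eq_zero_iff.1 (hN i hi)).2
    rw [sum_tsub_add_of_monotone hF.monotone hF'.monotone _ k.le_succ, hF.content N hl k,
      hF'.content N hl' k, LRPartition.add_parts]
  lattice r k := by
    rw [sum_tsub_add_of_monotone hF.monotone hF'.monotone _ (k + 1).le_succ,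
      sum_tsub_add_of_monotone hF.monotone hF'.monotone _ k.le_succ]
    exact add_le_add (hF.lattice r k) (hF'.lattice r k)

end IsLRPattern

def rowBoundary (l m : LRPartition) (T : ℕ × ℕ → ℕ) (i k : ℕ) : ℕ :=
  m.parts i + #{j ∈ Ico (m.parts i) (l.parts i) | T (i, j) ≤ k}

theorem rowBoundary_mono (l m : LRPartition) (T : ℕ × ℕ → ℕ) (i : ℕ) :
    Monotone (rowBoundary l m T i) := fun _ _ hk =>
  Nat.add_le_add_left (card_le_card fun _ hj => by
    rw [mem_filter] at hj ⊢
    exact ⟨hj.1, hj.2.trans hk⟩) _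

namespace IsLRTableau

variable {l m n : LRPartition} {T : ℕ × ℕ → ℕ}

theorem rowBoundary_le_parts (hT : IsLRTableau l m n T) (i k : ℕ) :
    rowBoundary l m T i k ≤ l.parts i := by
  have := (card_filter_le (Ico (m.parts i) (l.parts i)) fun j => T (i, j) ≤ k).trans_eq
    (Nat.card_Ico _ _)
  have := hT.sub i
  unfold rowBoundary
  omega

/-- Rows increase weakly, so the entries `≤ k` of a row form an initial segment of it. -/
theorem le_iff_lt_rowBoundary (hT : IsLRTableau l m n T) {i j : ℕ}
    (hc : (i, j) ∈ skewCells l m) (k : ℕ) : T (i, j) ≤ k ↔ j < rowBoundary l m T i k := by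
  obtain ⟨hmj, hjl⟩ := mem_skewCells.1 hc
  unfold rowBoundary
  constructor
  · intro hk
    have hsub : Icc (m.parts i) j ⊆ {j ∈ Ico (m.parts i) (l.parts i) | T (i, j) ≤ k} :=
      fun j' hj' => by
        obtain ⟨h1, h2⟩ := mem_Icc.1 hj'
        exact mem_filter.2 ⟨mem_Ico.2 ⟨h1, h2.trans_lt hjl⟩,
          (hT.row_weak i j' j ⟨h1, h2.trans_lt hjl⟩ ⟨hmj, hjl⟩ h2).trans hk⟩
    have := (Nat.card_Icc _ _).symm.trans_le (card_le_card hsub)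
    omega
  · intro hlt
    by_contra! hk
    have hsub : {j ∈ Ico (m.parts i) (l.parts i) | T (i, j) ≤ k} ⊆ Ico (m.parts i) j :=
      fun j' hj' => by
        obtain ⟨hj', hTj'⟩ := mem_filter.1 hj'
        obtain ⟨h1, h2⟩ := mem_Ico.1 hj'
        refine mem_Ico.2 ⟨h1, not_le.1 fun hjj' => ?_⟩
        have := hT.row_weak i j j' ⟨hmj, hjl⟩ ⟨h1, h2⟩ hjj'
        omega
    have := (card_le_card hsub).trans_eq (Nat.card_Ico _ _)
    omega

theorem isRowBoundary (hT : IsLRTableau l m n T) : IsRowBoundary l m T (rowBoundary l m T) where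
  parts_le _ _ := Nat.le_add_right _ _
  le_parts := hT.rowBoundary_le_parts
  le_iff _ _ k hc := hT.le_iff_lt_rowBoundary hc k

theorem rowBoundary_zero (hT : IsLRTableau l m n T) (i : ℕ) :
    rowBoundary l m T i 0 = m.parts i := by
  unfold rowBoundary
  rw [filter_false_of_mem fun j hj => not_le.2 (hT.pos (i, j) (mem_Ico.1 hj)), card_empty,
    add_zero]

theorem apply_le (hT : IsLRTableau l m n T) {K : ℕ}
    (hK : ∀ k, K ≤ k → n.parts k = 0) (p : ℕ × ℕ) : T p ≤ K := by
  by_contra! hp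
  obtain ⟨v, hv⟩ : ∃ v, T p = v + 1 := ⟨T p - 1, by omega⟩
  have hc : p ∈ skewCells l m := by
    by_contra hc
    rw [hT.zero p hc] at hp
    exact Nat.not_lt_zero K hp
  have hfin : {q ∈ skewCells l m | T q = v + 1}.Finite := (skewCells_finite l m).sep _
  have hpos := (Set.ncard_pos hfin).2 ⟨p, hc, hv⟩
  rw [hT.content v, hK v (by omega)] at hpos
  exact lt_irrefl 0 hpos

theorem rowBoundary_interlace (hT : IsLRTableau l m n T) (i k : ℕ) :
    rowBoundary l m T (i + 1) (k + 1) ≤ rowBoundary l m T i k := by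
  by_contra! hlt
  set j := rowBoundary l m T (i + 1) (k + 1) - 1
  have := hT.isRowBoundary.parts_le i k
  have := hT.rowBoundary_le_parts (i + 1) (k + 1)
  have := m.antitone' (Nat.le_add_right i 1)
  have := l.antitone' (Nat.le_add_right i 1)
  have hc : (i, j) ∈ skewCells l m := mem_skewCells.2 ⟨by omega, by omega⟩
  have hc' : (i + 1, j) ∈ skewCells l m := mem_skewCells.2 ⟨by omega, by omega⟩
  have hbelow := (hT.le_iff_lt_rowBoundary hc' (k + 1)).2 (by omega)
  have habove := (hT.le_iff_lt_rowBoundary hc k).not.2 (by omega)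
  have := hT.col_strict i (i + 1) j hc hc' i.lt_succ_self
  omega

theorem isLRPattern (hT : IsLRTableau l m n T) : IsLRPattern l m n (rowBoundary l m T) where
  apply_zero := hT.rowBoundary_zero
  monotone := rowBoundary_mono l m T
  le_parts := hT.rowBoundary_le_parts
  eventually_eq_parts := by
    obtain ⟨K, hK⟩ := n.eventually_zero
    refine ⟨K, fun i k hk => ?_⟩
    unfold rowBoundary
    rw [filter_true_of_mem fun j _ => (hT.apply_le hK _).trans hk, Nat.card_Ico]
    have := hT.sub i
    omega
  interlace := hT.rowBoundary_interlace
  content N hN k := by rw [← hT.isRowBoundary.ncard_eq_succ hN, hT.content]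
  lattice r k := by
    -- read from column `rowBoundary l m T r (k + 1)` on, row `r` shows all its entries `k + 2`
    -- and no entry `k + 1`
    have h := hT.lattice r (rowBoundary l m T r (k + 1)) (k + 1) k.succ_pos
    rw [hT.isRowBoundary.ncard_prefix_eq_succ, hT.isRowBoundary.ncard_prefix_eq_succ, max_self,
      max_eq_right (rowBoundary_mono l m T r k.le_succ), Nat.sub_self, add_zero] at h
    rwa [sum_range_succ]

end IsLRTableau

theorem Nat.sInf_le_iff_of_monotone {P : ℕ → Prop} (hP : Monotone P) (h : ∃ k, P k) (k : ℕ) :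
    sInf {k | P k} ≤ k ↔ P k :=
  ⟨fun hk => hP hk (Nat.sInf_mem h), fun hk => Nat.sInf_le hk⟩

open Classical in
noncomputable def patternTableau (l m : LRPartition) (F : ℕ → ℕ → ℕ) (p : ℕ × ℕ) : ℕ :=
  if p ∈ skewCells l m then sInf {k | p.2 < F p.1 k} else 0

namespace IsLRPattern

variable {l m n : LRPartition} {F : ℕ → ℕ → ℕ}

theorem antitone_apply (hF : IsLRPattern l m n F) (k : ℕ) : Antitone (F · k) :=
  antitone_nat_of_succ_le fun i => (hF.monotone (i + 1) k.le_succ).trans (hF.interlace i k)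

theorem interlace_of_lt (hF : IsLRPattern l m n F) {i i' : ℕ} (h : i < i') (k : ℕ) :
    F i' (k + 1) ≤ F i k :=
  (hF.antitone_apply (k + 1) h).trans (hF.interlace i k)

theorem isRowBoundary (hF : IsLRPattern l m n F) :
    IsRowBoundary l m (patternTableau l m F) F where
  parts_le i k := hF.apply_zero i ▸ hF.monotone i k.zero_le
  le_parts := hF.le_parts
  le_iff i j k hc := by
    obtain ⟨K, hK⟩ := hF.eventually_eq_parts
    have hjK : j < F i K := by
      rw [hK i K le_rfl]
      exact (mem_skewCells.1 hc).2
    rw [patternTableau, if_pos hc]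
    exact Nat.sInf_le_iff_of_monotone (fun _ _ hab h => h.trans_le (hF.monotone i hab)) ⟨K, hjK⟩ k

theorem patternTableau_pos (hF : IsLRPattern l m n F) {p : ℕ × ℕ} (hp : p ∈ skewCells l m) :
    0 < patternTableau l m F p := by
  refine Nat.pos_of_ne_zero fun h0 => ?_
  have := (hF.isRowBoundary.le_iff p.1 p.2 0 hp).1 h0.le
  rw [hF.apply_zero] at this
  exact hp.1.not_gt this

theorem isLRTableau (hF : IsLRPattern l m n F) : IsLRTableau l m n (patternTableau l m F) where
  sub i := hF.apply_zero i ▸ hF.le_parts i 0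
  pos _ := hF.patternTableau_pos
  zero _ hp := if_neg hp
  row_weak i j j' hc hc' hjj' := (hF.isRowBoundary.le_iff i j _ hc).2
    (hjj'.trans_lt ((hF.isRowBoundary.le_iff i j' _ hc').1 le_rfl))
  col_strict i i' j hc hc' hii' := by
    obtain ⟨u, hu⟩ := Nat.exists_eq_succ_of_ne_zero (hF.patternTableau_pos hc).ne'
    have hj : F i u ≤ j := not_lt.1 fun h => by
      have := (hF.isRowBoundary.le_iff i j u hc).2 h
      omega
    rw [hu, ← not_le, hF.isRowBoundary.le_iff i' j _ hc', not_lt]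
    exact (hF.interlace_of_lt hii' u).trans hj
  content k := by
    obtain ⟨N, hN⟩ := l.eventually_zero
    rw [hF.isRowBoundary.ncard_eq_succ hN, hF.content N hN k]
  lattice r c k hk := by
    obtain ⟨k, rfl⟩ : ∃ k', k = k' + 1 := ⟨k - 1, by omega⟩
    rw [hF.isRowBoundary.ncard_prefix_eq_succ, hF.isRowBoundary.ncard_prefix_eq_succ]
    have hlat := hF.lattice r k
    rw [sum_range_succ] at hlat
    have := le_max_left (F r (k + 1)) c
    omega

end IsLRPattern

theorem finite_setOf_isLRTableau (l m n : LRPartition) : {T | IsLRTableau l m n T}.Finite := by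
  obtain ⟨K, hK⟩ := n.eventually_zero
  have := (skewCells_finite l m).to_subtype
  refine Set.Finite.of_injOn (f := fun T (p : skewCells l m) => T p)
    (t := Set.univ.pi fun _ => Set.Iic K) ?_ ?_ (Set.Finite.pi fun _ => Set.finite_Iic K)
  · exact fun T hT p _ => hT.apply_le hK p
  · intro T hT T' hT' h
    funext p
    by_cases hp : p ∈ skewCells l m
    · exact congrFun h ⟨p, hp⟩
    · rw [hT.zero p hp, hT'.zero p hp]

theorem LRcoeff_ne_zero_iff {l m n : LRPartition} :
    LRcoeff l m n ≠ 0 ↔ ∃ T, IsLRTableau l m n T :=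
  Nat.pos_iff_ne_zero.symm.trans (Set.ncard_pos (finite_setOf_isLRTableau l m n))

/-- The triples of partitions with nonzero LR coefficient form an
additive semigroup: if `c(λ;μ,ν) ≠ 0` and `c(λ';μ',ν') ≠ 0`, then
`c(λ+λ'; μ+μ', ν+ν') ≠ 0`. -/
theorem lr_nonzero_add (l m n l' m' n' : LRPartition)
    (h : LRcoeff l m n ≠ 0) (h' : LRcoeff l' m' n' ≠ 0) :
    LRcoeff (l + l') (m + m') (n + n') ≠ 0 := by
  obtain ⟨T, hT⟩ := LRcoeff_ne_zero_iff.1 h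
  obtain ⟨T', hT'⟩ := LRcoeff_ne_zero_iff.1 h'
  exact LRcoeff_ne_zero_iff.2 ⟨_, (hT.isLRPattern.add hT'.isLRPattern).isLRTableau⟩
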